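/- arXiv:2604.01854 — 4 statements merged into one kernel-verified Lean document; each statement's English description precedes it below -/
import Mathlib

section
/- Let B be a bicategory and f : b₀ ⟶ b₁ a 1-morphism such that for every object Z of B the postcomposition functor (· ≫ f) : Hom_B(Z, b₀) ⥤ Hom_B(Z, b₁) admits a right adjoint R_Z. Then f admits a right adjoint in B (i.e. there exists a 1-morphism u : b₁ ⟶ b₀ and a bicategorical adjunction f ⊣ u) if and only if for every 1-morphism g : Z' ⟶ Z the square whose horizontal arrows are the postcomposition functors (· ≫ f) : Hom_B(Z, b₀) ⥤ Hom_B(Z, b₁) and (· ≫ f) : Hom_B(Z', b₀) ⥤ Hom_B(Z', b₁), and whose vertical arrows are the precomposition functors (g ≫ ·), commuting up to the natural isomorphism induced by the associator of B, is horizontally right adjointable; that is, the mate natural transformation from the composite 'R_Z, then (g ≫ ·)' to the composite '(g ≫ ·), then R_{Z'}' is a natural isomorphism. -/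
open CategoryTheory CategoryTheory.Bicategory

universe w v u

variable {B : Type u} [Bicategory.{w, v} B]

/-- The square of hom-categories whose horizontal arrows are postcomposition with `h` and whose
vertical arrows are precomposition with `f`, commuting up to the natural isomorphism induced by
the associator. -/
def assocSquareIso {a b c d : B} (f : a ⟶ b) (h : c ⟶ d) :
    Bicategory.precomp c f ⋙ Bicategory.postcomp a h ≅
      Bicategory.postcomp b h ⋙ Bicategory.precomp d f :=
  NatIso.ofComponents (fun x => α_ f x h)
    (by
      intros
      simp [Bicategory.precomp, Bicategory.postcomp])

namespace LM11Aux

section Transport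

variable {C₁ : Type*} {C₂ : Type*} {C₃ : Type*} {C₄ : Type*}
  [Category C₁] [Category C₂] [Category C₃] [Category C₄]
  {G : C₁ ⥤ C₃} {H : C₂ ⥤ C₄} {L₁ : C₁ ⥤ C₂} {R₁ R₁' : C₂ ⥤ C₁}
  {L₂ : C₃ ⥤ C₄} {R₂ R₂' : C₄ ⥤ C₃}

/-- Whether the mate of a square is an isomorphism does not depend on the choice of
the adjunctions. -/
theorem isIso_mate_transport (adj₁ : L₁ ⊣ R₁) (adj₁' : L₁ ⊣ R₁')
    (adj₂ : L₂ ⊣ R₂) (adj₂' : L₂ ⊣ R₂')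
    (α : G ⋙ L₂ ⟶ L₁ ⋙ H) [IsIso (mateEquiv adj₁' adj₂' α)] :
    IsIso (mateEquiv adj₁ adj₂ α) := by
  have h1 : mateEquiv adj₁ adj₂' α =
      (Functor.whiskerRight (conjugateEquiv adj₁ adj₁' (𝟙 L₁)) G ≫ (mateEquiv adj₁' adj₂' α : R₁' ⋙ G ⟶ H ⋙ R₂') : R₁ ⋙ G ⟶ H ⋙ R₂') := by
    have := conjugateEquiv_mateEquiv_vcomp adj₁ adj₁' adj₂' (𝟙 L₁) α
    rw [show TwoSquare.whiskerLeft α (𝟙 L₁) = α by ext x; dsimp [TwoSquare.whiskerLeft]; simp] at this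
    rw [this]
    rfl
  have h2 : mateEquiv adj₁ adj₂ α =
      ((mateEquiv adj₁ adj₂' α : R₁ ⋙ G ⟶ H ⋙ R₂') ≫ Functor.whiskerLeft H (conjugateEquiv adj₂' adj₂ (𝟙 L₂)) : R₁ ⋙ G ⟶ H ⋙ R₂) := by
    have := mateEquiv_conjugateEquiv_vcomp adj₁ adj₂' adj₂ α (𝟙 L₂)
    rw [show TwoSquare.whiskerRight α (𝟙 L₂) = α by ext x; dsimp [TwoSquare.whiskerRight]; simp] at this
    rw [this]
    rfl
  have i1 : IsIso (conjugateEquiv adj₁ adj₁' (𝟙 L₁)) :=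
    inferInstanceAs (IsIso (conjugateIsoEquiv adj₁ adj₁' (Iso.refl L₁)).hom)
  have i2 : IsIso (conjugateEquiv adj₂' adj₂ (𝟙 L₂)) :=
    inferInstanceAs (IsIso (conjugateIsoEquiv adj₂' adj₂ (Iso.refl L₂)).hom)
  have w1 : IsIso (Functor.whiskerRight (conjugateEquiv adj₁ adj₁' (𝟙 L₁)) G) :=
    inferInstanceAs (IsIso (((Functor.whiskeringRight _ _ _).obj G).map (conjugateEquiv adj₁ adj₁' (𝟙 L₁))))
  have w2 : IsIso (Functor.whiskerLeft H (conjugateEquiv adj₂' adj₂ (𝟙 L₂))) :=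
    inferInstanceAs (IsIso (((Functor.whiskeringLeft _ _ _).obj H).map (conjugateEquiv adj₂' adj₂ (𝟙 L₂))))
  rw [h2, h1]
  exact IsIso.comp_isIso' (IsIso.comp_isIso' w1 (by assumption)) w2

end Transport

section Forward

/-- From a bicategorical adjunction `f ⊣ u`, postcomposition with `f` is left adjoint to
postcomposition with `u` on each hom-category. -/
def postcompAdj {b₀ b₁ : B} {f : b₀ ⟶ b₁} {u : b₁ ⟶ b₀}
    (A : Bicategory.Adjunction f u) (Z : B) :
    Bicategory.postcomp Z f ⊣ Bicategory.postcomp Z u where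
  unit :=
    { app := fun h => (ρ_ h).inv ≫ h ◁ A.unit ≫ (α_ h f u).inv
      naturality := by
        intro h h' τ
        dsimp [postcomp]
        rw [rightUnitor_inv_naturality_assoc, ← whisker_exchange_assoc,
          associator_inv_naturality_left]
        simp }
  counit :=
    { app := fun k => (α_ k u f).hom ≫ k ◁ A.counit ≫ (ρ_ k).hom
      naturality := by
        intro k k' τ
        dsimp [postcomp]
        rw [associator_naturality_left_assoc, ← whisker_exchange_assoc,
          rightUnitor_naturality]
        simp }
  left_triangle_components := by
    intro h
    dsimp
    calc ((ρ_ h).inv ≫ h ◁ A.unit ≫ (α_ h f u).inv) ▷ f ≫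
          (α_ (h ≫ f) u f).hom ≫ (h ≫ f) ◁ A.counit ≫ (ρ_ (h ≫ f)).hom
        = 𝟙 _ ⊗≫ h ◁ leftZigzag A.unit A.counit ⊗≫ 𝟙 _ := by
          bicategory
      _ = 𝟙 (h ≫ f) := by
          rw [A.left_triangle]; bicategory
  right_triangle_components := by
    intro k
    dsimp
    calc ((ρ_ (k ≫ u)).inv ≫ (k ≫ u) ◁ A.unit ≫ (α_ (k ≫ u) f u).inv) ≫
          ((α_ k u f).hom ≫ k ◁ A.counit ≫ (ρ_ k).hom) ▷ u
        = 𝟙 _ ⊗≫ k ◁ rightZigzag A.unit A.counit ⊗≫ 𝟙 _ := by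
          bicategory
      _ = 𝟙 (k ≫ u) := by
          rw [A.right_triangle]; bicategory

/-- The mate of the associator square with respect to the adjunctions `postcompAdj` is
(the inverse of) an associator. -/
theorem mate_postcompAdj_app {b₀ b₁ : B} {f : b₀ ⟶ b₁} {u : b₁ ⟶ b₀}
    (A : Bicategory.Adjunction f u) {Z' Z : B} (g : Z' ⟶ Z) (k : Z ⟶ b₁) :
    (mateEquiv (postcompAdj A Z) (postcompAdj A Z') (assocSquareIso g f).hom).app k
      = (α_ g k u).inv := by
  erw [CategoryTheory.mateEquiv_apply]
  dsimp [assocSquareIso, postcompAdj, postcomp, precomp, TwoSquare.natTrans, TwoSquare.mk,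
    NatIso.ofComponents_hom_app, NatIso.ofComponents]
  calc _ = 𝟙 (g ≫ k ≫ u) ⊗≫ g ◁ k ◁ rightZigzag A.unit A.counit ⊗≫ 𝟙 ((g ≫ k) ≫ u) := by
        bicategory
    _ = (α_ g k u).inv := by rw [A.right_triangle]; bicategory

instance mate_postcompAdj_isIso {b₀ b₁ : B} {f : b₀ ⟶ b₁} {u : b₁ ⟶ b₀}
    (A : Bicategory.Adjunction f u) {Z' Z : B} (g : Z' ⟶ Z) :
    IsIso (mateEquiv (postcompAdj A Z) (postcompAdj A Z') (assocSquareIso g f).hom) := by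
  have : ∀ k, IsIso ((mateEquiv (postcompAdj A Z) (postcompAdj A Z')
      (assocSquareIso g f).hom).app k) := fun k => by
    rw [mate_postcompAdj_app]; exact Iso.isIso_inv _
  exact NatIso.isIso_of_isIso_app _

end Forward

section Backward

variable {b₀ b₁ : B} (f : b₀ ⟶ b₁) (R : ∀ Z : B, (Z ⟶ b₁) ⥤ (Z ⟶ b₀))
  (adj : ∀ Z : B, Bicategory.postcomp Z f ⊣ R Z)

/-- The candidate right adjoint. -/
abbrev cu : b₁ ⟶ b₀ := (R b₁).obj (𝟙 b₁)

/-- The candidate counit. -/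
abbrev cε : cu R ≫ f ⟶ 𝟙 b₁ := (adj b₁).counit.app (𝟙 b₁)

/-- The comparison map `k ≫ u ⟶ (R Z).obj k`. -/
def cψ {Z : B} (k : Z ⟶ b₁) : k ≫ cu R ⟶ (R Z).obj k :=
  (mateEquiv (adj b₁) (adj Z) (assocSquareIso k f).hom).app (𝟙 b₁) ≫ (R Z).map (ρ_ k).hom

/-- Composing with the candidate counit is given, through the adjunction `adj Z`, by
composition with the comparison map `cψ`. -/
theorem key {Z : B} (k : Z ⟶ b₁) (h : Z ⟶ b₀) (φ : h ⟶ k ≫ cu R) :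
    (φ ▷ f) ≫ (α_ k (cu R) f).hom ≫ (k ◁ cε f R adj) ≫ (ρ_ k).hom =
      ((adj Z).homEquiv h k).symm (φ ≫ cψ f R adj k) := by
  obtain ⟨m, hmdef⟩ : ∃ m : k ≫ cu R ⟶ (R Z).obj (k ≫ 𝟙 b₁),
      m = (mateEquiv (adj b₁) (adj Z) (assocSquareIso k f).hom).app (𝟙 b₁) := ⟨_, rfl⟩
  have hψ : cψ f R adj k = m ≫ (R Z).map (ρ_ k).hom := by subst hmdef; rfl
  rw [Adjunction.homEquiv_counit, hψ]
  have hnat := (adj Z).counit.naturality (ρ_ k).hom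
  have hm : m ▷ f ≫ (adj Z).counit.app (k ≫ 𝟙 b₁) = (α_ k (cu R) f).hom ≫ k ◁ cε f R adj := by
    subst hmdef; exact mateEquiv_counit (adj b₁) (adj Z) (assocSquareIso k f).hom (𝟙 b₁)
  dsimp at hnat
  simp only [Bicategory.postcomp_map] at hnat
  simp only [Bicategory.postcomp_map, comp_whiskerRight, Category.assoc]
  dsimp [Bicategory.postcomp] at hnat hm ⊢
  rw [Category.assoc, Category.assoc, hnat, reassoc_of% hm]

variable (hh : ∀ (Z' Z : B) (g : Z' ⟶ Z),
    IsIso (mateEquiv (adj Z) (adj Z') (assocSquareIso g f).hom))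

include hh

theorem isIso_cψ {Z : B} (k : Z ⟶ b₁) : IsIso (cψ f R adj k) := by
  haveI := hh Z b₁ k
  unfold cψ
  exact IsIso.comp_isIso' (NatIso.isIso_app_of_isIso _ _) (@Functor.map_isIso _ _ _ _ _ _ _ _ (Iso.isIso_hom _))

/-- The candidate unit. -/
noncomputable def cη : 𝟙 b₀ ⟶ f ≫ cu R :=
  haveI := isIso_cψ f R adj hh f
  ((adj b₀).homEquiv (𝟙 b₀) f) ((λ_ f).hom) ≫ inv (cψ f R adj f)

theorem hη : (cη f R adj hh ▷ f) ≫ (α_ f (cu R) f).hom ≫ (f ◁ cε f R adj) ≫ (ρ_ f).hom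
    = (λ_ f).hom := by
  haveI := isIso_cψ f R adj hh f
  rw [key, cη]
  simp
  exact Equiv.symm_apply_apply _ _

theorem hl : leftZigzag (cη f R adj hh) (cε f R adj) = (λ_ f).hom ≫ (ρ_ f).inv := by
  calc leftZigzag (cη f R adj hh) (cε f R adj)
      = ((cη f R adj hh ▷ f) ≫ (α_ f (cu R) f).hom ≫ (f ◁ cε f R adj) ≫ (ρ_ f).hom) ≫
          (ρ_ f).inv := by bicategory
    _ = (λ_ f).hom ≫ (ρ_ f).inv := by rw [hη]

theorem hr : rightZigzag (cη f R adj hh) (cε f R adj) =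
    (ρ_ (cu R)).hom ≫ (λ_ (cu R)).inv := by
  haveI := isIso_cψ f R adj hh (𝟙 b₁)
  have e1 : ((λ_ (cu R)).inv ▷ f) ≫ (α_ (𝟙 b₁) (cu R) f).hom ≫ (𝟙 b₁ ◁ cε f R adj) ≫
      (ρ_ (𝟙 b₁)).hom = cε f R adj := by
    bicategory
  have e2 : (((ρ_ (cu R)).inv ≫ rightZigzag (cη f R adj hh) (cε f R adj)) ▷ f) ≫
      (α_ (𝟙 b₁) (cu R) f).hom ≫ (𝟙 b₁ ◁ cε f R adj) ≫ (ρ_ (𝟙 b₁)).hom = cε f R adj := by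
    calc _ = 𝟙 _ ⊗≫ cu R ◁ (cη f R adj hh) ▷ f ⊗≫
          (cε f R adj ▷ (cu R ≫ f) ≫ 𝟙 b₁ ◁ cε f R adj) ⊗≫ 𝟙 _ := by
          dsimp only [rightZigzag]; bicategory
      _ = 𝟙 _ ⊗≫ cu R ◁ leftZigzag (cη f R adj hh) (cε f R adj) ⊗≫
            cε f R adj ▷ 𝟙 b₁ ⊗≫ 𝟙 _ := by
          rw [← whisker_exchange]; bicategory
      _ = cε f R adj := by rw [hl]; bicategory
  rw [key] at e1 e2
  have e3 := ((adj b₁).homEquiv (cu R) (𝟙 b₁)).symm.injective (e1.trans e2.symm)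
  have e4 := (cancel_mono (cψ f R adj (𝟙 b₁))).mp e3
  rw [← cancel_epi (ρ_ (cu R)).inv, ← e4]
  simp

end Backward

end LM11Aux

/-- Lemma 1.1 (lm:intladj0): if every postcomposition functor `(· ≫ f)` admits a right adjoint,
then `f` admits a right adjoint in the bicategory `B` if and only if for every `g : Z' ⟶ Z`
the square formed by postcomposition with `f` and precomposition with `g` (commuting via the
associator) is horizontally right adjointable, i.e. the mate
`R Z ⋙ (g ≫ ·) ⟶ (g ≫ ·) ⋙ R Z'` is a natural isomorphism. -/
theorem stmt0 {b₀ b₁ : B} (f : b₀ ⟶ b₁)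
    (R : ∀ Z : B, (Z ⟶ b₁) ⥤ (Z ⟶ b₀))
    (adj : ∀ Z : B, Bicategory.postcomp Z f ⊣ R Z) :
    (∃ u : b₁ ⟶ b₀, Nonempty (Bicategory.Adjunction f u)) ↔
      ∀ (Z' Z : B) (g : Z' ⟶ Z),
        IsIso (mateEquiv (adj Z) (adj Z') (assocSquareIso g f).hom) := by
  constructor
  · rintro ⟨u, ⟨A⟩⟩ Z' Z g
    exact LM11Aux.isIso_mate_transport (adj Z) (LM11Aux.postcompAdj A Z) (adj Z')
      (LM11Aux.postcompAdj A Z') _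
  · intro hh
    exact ⟨LM11Aux.cu R, ⟨⟨LM11Aux.cη f R adj hh, LM11Aux.cε f R adj,
      LM11Aux.hl f R adj hh, LM11Aux.hr f R adj hh⟩⟩⟩
end

section
/- Let A, C be categories and (f_i : A ⥤ B_i)_{i ∈ ι} a family of functors that is jointly conservative, meaning a morphism of A is an isomorphism as soon as its image under every f_i is an isomorphism. Suppose each f_i admits a left adjoint f_i^L : B_i ⥤ A. Let F, G : A ⥤ C be functors each of which admits a right adjoint, and let η : F ⟶ G be a natural transformation. If for every i ∈ ι the whiskered natural transformation whiskerLeft f_i^L η : f_i^L ⋙ F ⟶ f_i^L ⋙ G is an isomorphism, then η is an isomorphism. -/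
open CategoryTheory

universe v₁ v₂ v₃ u₁ u₂ u₃ w

lemma conj_whisker' {B : Type u₃} [Category.{v₃} B] {A : Type u₁} [Category.{v₁} A]
    {C : Type u₂} [Category.{v₂} C]
    {fL : B ⥤ A} {f : A ⥤ B} (adj : fL ⊣ f) {F G : A ⥤ C} {RF RG : C ⥤ A}
    (adjF : F ⊣ RF) (adjG : G ⊣ RG) (η : F ⟶ G) :
    conjugateEquiv (adj.comp adjG) (adj.comp adjF) (Functor.whiskerLeft fL η) =
      Functor.whiskerRight (conjugateEquiv adjG adjF η) f := by
  ext c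
  unfold conjugateEquiv mateEquiv Adjunction.comp
  simp
  simp only [← Functor.map_comp]
  rw [← NatTrans.naturality_assoc]
  rw [RF.map_comp, Adjunction.unit_naturality_assoc, f.map_comp,
    adj.right_triangle_components_assoc]

/-- Lemma 1.4 (lm:jtlycoco): given a jointly conservative family of functors `f i : A ⥤ B i`,
each admitting a left adjoint `fL i`, a natural transformation `η : F ⟶ G` between functors
admitting right adjoints is an isomorphism as soon as each whiskering `whiskerLeft (fL i) η`
is an isomorphism. -/
theorem stmt2 {A : Type u₁} [Category.{v₁} A] {C : Type u₂} [Category.{v₂} C]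
    {ι : Type w} {Bc : ι → Type u₃} [∀ i, Category.{v₃} (Bc i)]
    (f : ∀ i, A ⥤ Bc i)
    (hcons : ∀ {X Y : A} (φ : X ⟶ Y), (∀ i, IsIso ((f i).map φ)) → IsIso φ)
    (fL : ∀ i, Bc i ⥤ A) (adj : ∀ i, fL i ⊣ f i)
    (F G : A ⥤ C) [F.IsLeftAdjoint] [G.IsLeftAdjoint]
    (η : F ⟶ G)
    (h : ∀ i, IsIso (Functor.whiskerLeft (fL i) η)) :
    IsIso η := by
  let adjF := Adjunction.ofIsLeftAdjoint F
  let adjG := Adjunction.ofIsLeftAdjoint G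
  have key : IsIso (conjugateEquiv adjG adjF η) := by
    have : ∀ c, IsIso ((conjugateEquiv adjG adjF η).app c) := by
      intro c
      apply hcons
      intro i
      have e : (f i).map ((conjugateEquiv adjG adjF η).app c) =
          (Functor.whiskerRight (conjugateEquiv adjG adjF η) (f i)).app c := rfl
      rw [e, ← conj_whisker' (adj i) adjF adjG η]
      haveI := h i
      infer_instance
    exact NatIso.isIso_of_isIso_app _
  exact conjugateEquiv_of_iso adjG adjF η
end

section
/- Let I be a category and let f : j ⟶ j' and g : j ⟶ i be morphisms of I. Let E denote the comma category CostructuredArrow (Under.map f) (Under.mk g), whose objects are pairs consisting of a morphism u : j' ⟶ x together with a morphism v : x ⟶ i satisfying (f ≫ u) ≫ v = g. Let S be the discrete category on the set of morphisms σ : j' ⟶ i with f ≫ σ = g, and let ι : S ⥤ E be the functor sending σ to the object given by u = σ : j' ⟶ i and v = 𝟙_i. Then ι admits a left adjoint, given on objects by sending (u : j' ⟶ x, v : x ⟶ i) to the composite u ≫ v : j' ⟶ i; in particular, ι is a final (colimit-cofinal) functor. -/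
open CategoryTheory

universe v u

variable {I : Type u} [Category.{v} I]

/-- The comma category `E` whose objects are pairs of a morphism `u : j' ⟶ x` together
with `v : x ⟶ i` such that `(f ≫ u) ≫ v = g`. -/
abbrev LaxFiber {i j j' : I} (f : j ⟶ j') (g : j ⟶ i) : Type _ :=
  CostructuredArrow (Under.map f) (Under.mk g)

/-- The discrete category on the set of morphisms `σ : j' ⟶ i` with `f ≫ σ = g`. -/
abbrev StrictFiber {i j j' : I} (f : j ⟶ j') (g : j ⟶ i) : Type _ :=
  Discrete {σ : j' ⟶ i // f ≫ σ = g}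

/-- The inclusion of the strict fiber into the lax fiber, sending `σ` to the pair
`(σ : j' ⟶ i, 𝟙 i)`. -/
def strictFiberInclusion {i j j' : I} (f : j ⟶ j') (g : j ⟶ i) :
    StrictFiber f g ⥤ LaxFiber f g :=
  Discrete.functor fun σ =>
    CostructuredArrow.mk (Y := Under.mk σ.1)
      (Under.homMk (𝟙 i) (by simpa using σ.2))

/-- The composite `(u, v) ↦ u ≫ v` is in the strict fiber. -/
lemma laxFiber_comp_mem {i j j' : I} (f : j ⟶ j') (g : j ⟶ i) (e : LaxFiber f g) :
    f ≫ (e.left.hom ≫ e.hom.right) = g := (Category.assoc _ _ _).symm.trans (Under.w e.hom)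

lemma laxFiber_map_eq {i j j' : I} {f : j ⟶ j'} {g : j ⟶ i} {e e' : LaxFiber f g}
    (m : e ⟶ e') : e.left.hom ≫ e.hom.right = e'.left.hom ≫ e'.hom.right := by
  have h1 : e.left.hom ≫ m.left.right = e'.left.hom := Under.w m.left
  have h2 : m.left.right ≫ e'.hom.right = e.hom.right :=
    congrArg CommaMorphism.right (CostructuredArrow.w m)
  exact (congrArg (e.left.hom ≫ ·) h2).symm.trans
    ((Category.assoc _ _ _).symm.trans (congrArg (· ≫ e'.hom.right) h1))

/-- The left adjoint to the strict fiber inclusion. -/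
def laxFiberL {i j j' : I} (f : j ⟶ j') (g : j ⟶ i) : LaxFiber f g ⥤ StrictFiber f g where
  obj e := Discrete.mk ⟨e.left.hom ≫ e.hom.right, laxFiber_comp_mem f g e⟩
  map m := Discrete.eqToHom (by ext; exact laxFiber_map_eq m)

lemma laxFiberReflection {i j j' : I} (f : j ⟶ j') (g : j ⟶ i) :
    ∃ L : LaxFiber f g ⥤ StrictFiber f g,
      Nonempty (L ⊣ strictFiberInclusion f g) ∧
        ∀ e : LaxFiber f g,
          L.obj e = Discrete.mk ⟨e.left.hom ≫ e.hom.right, laxFiber_comp_mem f g e⟩ := by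
  refine ⟨laxFiberL f g, ⟨Adjunction.mkOfHomEquiv
    { homEquiv := fun e σ =>
        { toFun := fun h => by
            have hσ : e.left.hom ≫ e.hom.right = σ.1.1 := by
              have := h.1.1; exact congrArg Subtype.val this
            exact CostructuredArrow.homMk
              (Under.homMk e.hom.right (by simpa [strictFiberInclusion] using hσ))
              (by ext; exact Category.comp_id _)
          invFun := fun m => Discrete.eqToHom (by
            ext
            exact (laxFiber_map_eq m).trans (Category.comp_id _))
          left_inv := fun h => Subsingleton.elim _ _
          right_inv := fun m => by
            apply CostructuredArrow.hom_ext
            apply Under.UnderMorphism.ext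
            have := congrArg CommaMorphism.right (CostructuredArrow.w m)
            exact this.symm.trans (Category.comp_id _) }
      homEquiv_naturality_left_symm := fun _ _ => Subsingleton.elim _ _
      homEquiv_naturality_right := fun {e Y Y'} m h => by
        obtain ⟨Y⟩ := Y
        obtain ⟨Y'⟩ := Y'
        obtain ⟨⟨h⟩⟩ := h
        cases h
        apply CostructuredArrow.hom_ext
        apply Under.UnderMorphism.ext
        simp [strictFiberInclusion] }⟩, fun e => rfl⟩

/-- The key cofinality claim in the proof of Proposition 1.13 (prop:incladj): the inclusion of
the strict fiber into the lax fiber admits a left adjoint, given on objects by composing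
`(u : j' ⟶ x, v : x ⟶ i)` to `u ≫ v : j' ⟶ i`; in particular this inclusion is final. -/
theorem stmt3 {i j j' : I} (f : j ⟶ j') (g : j ⟶ i) :
    (∃ L : LaxFiber f g ⥤ StrictFiber f g,
        Nonempty (L ⊣ strictFiberInclusion f g) ∧
          ∀ e : LaxFiber f g,
            L.obj e = Discrete.mk ⟨e.left.hom ≫ e.hom.right, by exact (Category.assoc _ _ _).symm.trans (Under.w e.hom)⟩) ∧
      (strictFiberInclusion f g).Final := by
  obtain ⟨L, ⟨adj⟩, hL⟩ := laxFiberReflection f g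
  exact ⟨⟨L, ⟨adj⟩, fun e => hL e⟩, Functor.final_of_adjunction adj⟩
end

section
/- Let C and D be categories with D idempotent complete. Let U : D ⥤ C and F : C ⥤ D be functors, and let η : 𝟭_C ⟶ F ⋙ U and ε : U ⋙ F ⟶ 𝟭_D be natural transformations satisfying the single triangle identity on U: for every object d of D, the composite U d ⟶ U (F (U d)) ⟶ U d of η at U d followed by U applied to ε at d is the identity of U d. Then U admits a left adjoint L : C ⥤ D, and for every object x of C the object L x is a retract of F x in D. -/
/-!
The composite `e = F η ≫ ε F : F ⟶ F` is a natural idempotent: the one triangle identity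
gives `e_{U d} ≫ ε_d = ε_d`, and idempotence follows by naturality. Functor categories into an
idempotent complete category are idempotent complete, so `e` splits as `r ≫ s` through a
functor `L`, and `η ≫ U r`, `s U ≫ ε` are the unit and counit of `L ⊣ U`.
-/

open CategoryTheory

universe v₁ v₂ u₁ u₂

namespace CategoryTheory

variable {C : Type u₁} {D : Type u₂} [Category.{v₁} C] [Category.{v₂} D]
  {U : D ⥤ C} {F : C ⥤ D} (η : 𝟭 C ⟶ F ⋙ U) (ε : U ⋙ F ⟶ 𝟭 D)

@[simps]
def unitCounitIdempotent : F ⟶ F where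
  app x := F.map (η.app x) ≫ ε.app (F.obj x)
  naturality x y f := by
    have hη := congrArg F.map (η.naturality f)
    have hε := ε.naturality (F.map f)
    simp only [Functor.id_obj, Functor.comp_obj, Functor.id_map, Functor.comp_map,
      F.map_comp] at hη hε
    rw [reassoc_of% hη, hε, Category.assoc]

variable {η ε}
variable (triangle : ∀ d : D, η.app (U.obj d) ≫ U.map (ε.app d) = 𝟙 (U.obj d))
include triangle

theorem unitCounitIdempotent_app_comp_counit (d : D) :
    (unitCounitIdempotent η ε).app (U.obj d) ≫ ε.app d = ε.app d := by
  have hε : ε.app (F.obj (U.obj d)) ≫ ε.app d = F.map (U.map (ε.app d)) ≫ ε.app d :=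
    (ε.naturality (ε.app d)).symm
  rw [unitCounitIdempotent_app, Category.assoc, hε, ← F.map_comp_assoc, triangle,
    F.map_id, Category.id_comp]

theorem unitCounitIdempotent_comp_self :
    unitCounitIdempotent η ε ≫ unitCounitIdempotent η ε = unitCounitIdempotent η ε := by
  ext x
  have h : F.map (η.app x) ≫ (unitCounitIdempotent η ε).app (U.obj (F.obj x)) =
      (unitCounitIdempotent η ε).app x ≫ F.map (η.app x) :=
    (unitCounitIdempotent η ε).naturality (η.app x)
  rw [NatTrans.comp_app]
  nth_rewrite 2 [unitCounitIdempotent_app]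
  rw [← Category.assoc, ← h, Category.assoc, unitCounitIdempotent_app_comp_counit triangle,
    unitCounitIdempotent_app]

def adjunctionOfSplitting {L : C ⥤ D} (s : L ⟶ F) (r : F ⟶ L) (hsr : s ≫ r = 𝟙 L)
    (hrs : r ≫ s = unitCounitIdempotent η ε) : L ⊣ U where
  unit := η ≫ Functor.whiskerRight r U
  counit := Functor.whiskerLeft U s ≫ ε
  left_triangle_components x := by
    have hs : L.map (η.app x ≫ U.map (r.app x)) ≫ s.app (U.obj (L.obj x)) =
        s.app x ≫ F.map (η.app x ≫ U.map (r.app x)) := s.naturality _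
    have hε : F.map (U.map (r.app x)) ≫ ε.app (L.obj x) = ε.app (F.obj x) ≫ r.app x :=
      ε.naturality (r.app x)
    have hrs_x : r.app x ≫ s.app x = F.map (η.app x) ≫ ε.app (F.obj x) := by
      rw [← NatTrans.comp_app, hrs, unitCounitIdempotent_app]
    dsimp only [NatTrans.comp_app, Functor.id_obj, Functor.comp_obj, Functor.whiskerRight_app,
      Functor.whiskerLeft_app]
    rw [reassoc_of% hs, F.map_comp, Category.assoc, hε, ← reassoc_of% hrs_x,
      ← NatTrans.comp_app_assoc, hsr, NatTrans.id_app, Category.id_comp,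
      ← NatTrans.comp_app, hsr, NatTrans.id_app]
  right_triangle_components d := by
    have hrs_d : r.app (U.obj d) ≫ s.app (U.obj d) ≫ ε.app d = ε.app d := by
      rw [← NatTrans.comp_app_assoc, hrs, unitCounitIdempotent_app_comp_counit triangle]
    dsimp only [NatTrans.comp_app, Functor.id_obj, Functor.comp_obj, Functor.whiskerRight_app,
      Functor.whiskerLeft_app]
    rw [Category.assoc, ← U.map_comp, hrs_d, triangle]

end CategoryTheory

/-- The formal 1-categorical core of the proof of Corollary 3.4 (cor:exist): given functors
`U : D ⥤ C`, `F : C ⥤ D` with `D` idempotent complete, a "unit" `η : 𝟭 C ⟶ F ⋙ U` and a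
"counit" `ε : U ⋙ F ⟶ 𝟭 D` satisfying the single triangle identity on `U`, the functor `U`
admits a left adjoint `L` whose value `L x` is a retract of `F x` for every `x`. -/
theorem stmt6 {C : Type u₁} {D : Type u₂} [Category.{v₁} C] [Category.{v₂} D]
    [IsIdempotentComplete D]
    (U : D ⥤ C) (F : C ⥤ D)
    (η : 𝟭 C ⟶ F ⋙ U) (ε : U ⋙ F ⟶ 𝟭 D)
    (triangle : ∀ d : D, η.app (U.obj d) ≫ U.map (ε.app d) = 𝟙 (U.obj d)) :
    ∃ L : C ⥤ D, Nonempty (L ⊣ U) ∧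
      ∀ x : C, ∃ (s : L.obj x ⟶ F.obj x) (r : F.obj x ⟶ L.obj x), s ≫ r = 𝟙 (L.obj x) := by
  obtain ⟨L, s, r, hsr, hrs⟩ := IsIdempotentComplete.idempotents_split F
    (unitCounitIdempotent η ε) (unitCounitIdempotent_comp_self triangle)
  exact ⟨L, ⟨adjunctionOfSplitting triangle s r hsr hrs⟩,
    fun x => ⟨s.app x, r.app x, by rw [← NatTrans.comp_app, hsr, NatTrans.id_app]⟩⟩
end
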